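/- For a ≥ 0: ∫_0^∞ z^{−1/2} exp(−a/z − z) dz = √π · e^{−2√a}. -/

import Mathlib

/-!
After `z = t ^ 2` the integral becomes `2 ∫₀^∞ exp (-a / t ^ 2 - t ^ 2) dt`, and
`-a / t ^ 2 - t ^ 2 = -(t - √a / t) ^ 2 - 2 √a`. By the Cauchy–Schlömilch transformation,
`∫₀^∞ g (t - s / t) dt = ½ ∫ g` for even integrable `g` and `s ≥ 0`: the substitution
`u = t - s / t` maps `(0, ∞)` onto `ℝ` with `du = (1 + s / t ^ 2) dt`, and the inversion
`t ↦ s / t` shows that the two parts of `1 + s / t ^ 2` contribute equally. With the Gaussian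
integral `∫ exp (-u ^ 2) = √π` this gives `√π · exp (-2 √a)`.
-/

open Real MeasureTheory Set

lemma image_sub_div_Ioi {s : ℝ} (hs : 0 < s) : (fun t : ℝ => t - s / t) '' Ioi 0 = univ := by
  refine eq_univ_of_forall fun u => ?_
  have hd : √(u ^ 2 + 4 * s) ^ 2 = u ^ 2 + 4 * s := sq_sqrt (by positivity)
  have hu : |u| < √(u ^ 2 + 4 * s) := by
    rw [← sqrt_sq_eq_abs]; exact sqrt_lt_sqrt (sq_nonneg u) (by linarith)
  have ht : 0 < u + √(u ^ 2 + 4 * s) := by linarith [neg_abs_le u]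
  -- the positive root of `t ^ 2 - u * t - s`
  refine ⟨(u + √(u ^ 2 + 4 * s)) / 2, half_pos ht, ?_⟩
  have := ht.ne'
  field_simp
  nlinarith

lemma strictMonoOn_sub_div {s : ℝ} (hs : 0 ≤ s) : StrictMonoOn (fun t : ℝ => t - s / t) (Ioi 0) :=
  fun x hx y _ hxy => by
    have := div_le_div_of_nonneg_left hs hx hxy.le
    dsimp only
    linarith

lemma hasDerivAt_sub_div (s : ℝ) {t : ℝ} (ht : t ≠ 0) :
    HasDerivAt (fun t : ℝ => t - s / t) (1 + s / t ^ 2) t := by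
  have h := (hasDerivAt_id' t).sub ((hasDerivAt_inv ht).const_mul s)
  simp only [← div_eq_mul_inv] at h
  exact h.congr_deriv (by ring)

lemma integral_Ioi_deriv_mul_comp_sub_div {s : ℝ} (hs : 0 < s) (g : ℝ → ℝ) :
    ∫ t in Ioi 0, (1 + s / t ^ 2) * g (t - s / t) = ∫ u, g u := by
  conv_rhs => rw [← setIntegral_univ, ← image_sub_div_Ioi hs]
  rw [integral_image_eq_integral_abs_deriv_smul measurableSet_Ioi
    (fun t ht => (hasDerivAt_sub_div s (ne_of_gt ht)).hasDerivWithinAt)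
    (strictMonoOn_sub_div hs.le).injOn]
  refine setIntegral_congr_fun measurableSet_Ioi fun t (ht : 0 < t) => ?_
  rw [smul_eq_mul, abs_of_pos (by positivity)]

lemma integrableOn_Ioi_deriv_mul_comp_sub_div {s : ℝ} (hs : 0 < s) {g : ℝ → ℝ}
    (hg : Integrable g) : IntegrableOn (fun t => (1 + s / t ^ 2) * g (t - s / t)) (Ioi 0) := by
  rw [← integrableOn_univ, ← image_sub_div_Ioi hs,
    integrableOn_image_iff_integrableOn_abs_deriv_smul measurableSet_Ioi
      (fun t ht => (hasDerivAt_sub_div s (ne_of_gt ht)).hasDerivWithinAt)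
      (strictMonoOn_sub_div hs.le).injOn] at hg
  refine hg.congr_fun (fun t (ht : 0 < t) => ?_) measurableSet_Ioi
  dsimp only
  rw [smul_eq_mul, abs_of_pos (by positivity)]

lemma integral_Ioi_div_sq_mul_comp_div {s : ℝ} (hs : 0 < s) (f : ℝ → ℝ) :
    ∫ t in Ioi 0, s / t ^ 2 * f (s / t) = ∫ t in Ioi 0, f t := by
  have hinv : LeftInvOn (fun t : ℝ => s / t) (fun t => s / t) (Ioi 0) :=
    fun t _ => div_div_cancel₀ hs.ne'
  have himage : (fun t : ℝ => s / t) '' Ioi 0 = Ioi 0 :=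
    (image_subset_iff.2 fun t ht => div_pos hs ht).antisymm
      fun t ht => ⟨s / t, div_pos hs ht, hinv ht⟩
  have hderiv (t : ℝ) (ht : t ∈ Ioi 0) :
      HasDerivWithinAt (fun t : ℝ => s / t) (-(s / t ^ 2)) (Ioi 0) t := by
    simpa [div_eq_mul_inv] using ((hasDerivAt_inv (ne_of_gt ht)).const_mul s).hasDerivWithinAt
  conv_rhs => rw [← himage]
  rw [integral_image_eq_integral_abs_deriv_smul measurableSet_Ioi hderiv hinv.injOn]
  refine setIntegral_congr_fun measurableSet_Ioi fun t (ht : 0 < t) => ?_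
  rw [smul_eq_mul, abs_neg, abs_of_pos (by positivity)]

lemma integral_Ioi_eq_half_integral_of_even {g : ℝ → ℝ} (hg : g.Even) :
    ∫ t in Ioi 0, g t = (∫ u, g u) / 2 := by
  have h : (fun u => g |u|) = g := funext fun u => by
    rcases abs_choice u with hu | hu <;> simp [hu, hg.eq]
  have := integral_comp_abs (f := g)
  rw [h] at this
  linarith

theorem integral_Ioi_comp_sub_div_of_even {s : ℝ} (hs : 0 ≤ s) {g : ℝ → ℝ} (hg : Integrable g)
    (hg_even : g.Even) : ∫ t in Ioi 0, g (t - s / t) = (∫ u, g u) / 2 := by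
  rcases hs.eq_or_lt with rfl | hs
  · simpa using integral_Ioi_eq_half_integral_of_even hg_even
  set G := fun t => g (t - s / t)
  have hF := integrableOn_Ioi_deriv_mul_comp_sub_div hs hg
  have hG : IntegrableOn G (Ioi 0) := by
    refine IntegrableOn.congr_fun (hF.bdd_mul (c := 1) (f := fun t => (1 + s / t ^ 2)⁻¹)
      (Measurable.aestronglyMeasurable (by fun_prop)) (ae_of_all _ fun t => ?_))
      (fun t _ => inv_mul_cancel_left₀ (by positivity) _) measurableSet_Ioi
    rw [norm_inv, Real.norm_of_nonneg (by positivity)]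
    exact inv_le_one_of_one_le₀ (le_add_of_nonneg_right (by positivity))
  have hH : IntegrableOn (fun t => s / t ^ 2 * G t) (Ioi 0) :=
    (hF.sub hG).congr_fun (fun t _ => by simp only [Pi.sub_apply, G]; ring) measurableSet_Ioi
  -- `t ↦ s / t` preserves `t - s / t` up to sign
  have hsymm : ∫ t in Ioi 0, s / t ^ 2 * G t = ∫ t in Ioi 0, G t := by
    rw [← integral_Ioi_div_sq_mul_comp_div hs G]
    refine setIntegral_congr_fun measurableSet_Ioi fun t (ht : 0 < t) => ?_
    simp only [G, div_div_cancel₀ hs.ne', ← neg_sub t, hg_even.eq]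
  have hsplit := integral_Ioi_deriv_mul_comp_sub_div hs g
  simp only [add_mul, one_mul] at hsplit
  rw [integral_add hG hH, hsymm] at hsplit
  linarith

lemma integral_Ioi_rpow_neg_half_mul (f : ℝ → ℝ) :
    ∫ z in Ioi 0, z ^ (-(1 : ℝ) / 2) * f z = 2 * ∫ t in Ioi 0, f (t ^ 2) := by
  rw [← integral_comp_rpow_Ioi_of_pos (p := 2) two_pos, ← integral_const_mul]
  refine setIntegral_congr_fun measurableSet_Ioi fun t (ht : 0 < t) => ?_
  have h : (t ^ (2 : ℝ)) ^ (-(1 : ℝ) / 2) = t⁻¹ := by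
    rw [← rpow_mul ht.le, ← rpow_neg_one]; norm_num
  rw [smul_eq_mul, h, rpow_two]
  norm_num
  field_simp

lemma neg_div_sq_sub_sq {a : ℝ} (ha : 0 ≤ a) {t : ℝ} (ht : t ≠ 0) :
    -a / t ^ 2 - t ^ 2 = -(t - √a / t) ^ 2 - 2 * √a := by
  field_simp
  linear_combination sq_sqrt ha

lemma integral_exp_neg_sq : ∫ u : ℝ, exp (-u ^ 2) = √π := by
  simpa using integral_gaussian 1

theorem integral_inv_sqrt_exp :
    ∀ a : ℝ, 0 ≤ a →
      ∫ z in Set.Ioi (0 : ℝ), z ^ (-(1 : ℝ) / 2) * Real.exp (-a / z - z)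
        = Real.sqrt π * Real.exp (-2 * Real.sqrt a) := by
  intro a ha
  have hgauss : Integrable fun u : ℝ => exp (-u ^ 2) := by
    simpa using integrable_exp_neg_mul_sq one_pos
  calc ∫ z in Ioi 0, z ^ (-(1 : ℝ) / 2) * exp (-a / z - z)
      = 2 * ∫ t in Ioi 0, exp (-a / t ^ 2 - t ^ 2) := integral_Ioi_rpow_neg_half_mul _
    _ = 2 * ∫ t in Ioi 0, exp (-2 * √a) * exp (-(t - √a / t) ^ 2) := by
      congr 1
      refine setIntegral_congr_fun measurableSet_Ioi fun t (ht : 0 < t) => ?_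
      rw [neg_div_sq_sub_sq ha ht.ne', ← exp_add]
      ring_nf
    _ = √π * exp (-2 * √a) := by
      rw [integral_const_mul, integral_Ioi_comp_sub_div_of_even (sqrt_nonneg a) hgauss
        (fun u => by rw [neg_sq]), integral_exp_neg_sq]
      ring
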